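/- arXiv:1412.1769 — 4 statements merged into one kernel-verified Lean document; each statement's English description precedes it below -/
import Mathlib

section
/- For every positive integer d, every integer k with 1 ≤ k < d, and S = [0,1]ᵈ \ ℚᵈ, the k-simplex set Hull_k(S) = {(A₀,...,A_k) ∈ S^{k+1} : conv{A₀,...,A_k} ⊆ S} has full measure in S^{k+1}; that is, the k-index of convexity b_k(S) equals 1. -/
/-!
Fix a point `p`. If `p` lies in the affine span of `A₀, …, A_k`, then the vectors `Aᵢ - p` are
linearly dependent, and `k + 1 ≤ d` vectors are dependent only on a null set: by Fubini, once
the first `k` of them are independent the last one must lie in their span, a proper subspace.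
Taking the countable union over the rational points `p`, almost every tuple of points of the
cube spans a simplex that stays in the cube and misses `ℚᵈ`.
-/

open MeasureTheory Set

theorem not_linearIndependent_sub_of_mem_affineSpan {k V ι : Type*} [Ring k] [Nontrivial k]
    [AddCommGroup V] [Module k V] [Fintype ι] {A : ι → V} {p : V}
    (hp : p ∈ affineSpan k (range A)) : ¬LinearIndependent k fun i => A i - p := by
  intro hind
  obtain ⟨w, hw, rfl⟩ := eq_affineCombination_of_mem_affineSpan_of_fintype hp
  have hzero : ∑ i, w i • (A i - Finset.univ.affineCombination k A w) = 0 := by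
    simp only [smul_sub, Finset.sum_sub_distrib, ← Finset.sum_smul, hw, one_smul,
      Finset.affineCombination_eq_linear_combination _ _ _ hw, sub_self]
  have := Fintype.linearIndependent_iff.mp hind w hzero
  simp [this] at hw

namespace MeasureTheory

theorem measurePreserving_finCons_swap {α : Type*} [MeasurableSpace α] (μ : Measure α)
    [SigmaFinite μ] (n : ℕ) :
    MeasurePreserving (fun z : (Fin n → α) × α => (Fin.cons z.2 z.1 : Fin (n + 1) → α))
      ((Measure.pi fun _ => μ).prod μ) (Measure.pi fun _ => μ) := by
  convert (measurePreserving_piFinSuccAbove (fun _ : Fin (n + 1) => μ) 0).symm.comp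
    Measure.measurePreserving_swap using 1
  ext z : 1
  simp [Fin.consEquiv]

variable {E : Type*} [NormedAddCommGroup E] [NormedSpace ℝ E] [FiniteDimensional ℝ E]
  [MeasurableSpace E] [BorelSpace E]

theorem measurableSet_setOf_not_linearIndependent {ι : Type*} [Finite ι] :
    MeasurableSet {v : ι → E | ¬LinearIndependent ℝ v} :=
  isOpen_setOfPred_linearIndependent.measurableSet.compl

namespace Measure

variable (μ : Measure E) [μ.IsAddHaarMeasure]

theorem addHaar_span_range {n : ℕ} (hn : n < Module.finrank ℝ E) (w : Fin n → E) :
    μ (Submodule.span ℝ (range w)) = 0 := by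
  refine addHaar_submodule μ _ fun htop => ?_
  have := finrank_range_le_card (R := ℝ) w
  rw [Set.finrank, htop, finrank_top, Fintype.card_fin] at this
  omega

theorem pi_setOf_not_linearIndependent_eq_zero {n : ℕ} (hn : n ≤ Module.finrank ℝ E) :
    Measure.pi (fun _ : Fin n => μ) {v | ¬LinearIndependent ℝ v} = 0 := by
  induction n with
  | zero => simp
  | succ n ih =>
    have hcons := measurePreserving_finCons_swap μ n
    set cons : (Fin n → E) × E → (Fin (n + 1) → E) := fun z => Fin.cons z.2 z.1
    rw [← hcons.measure_preimage measurableSet_setOf_not_linearIndependent.nullMeasurableSet]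
    set fresh := Prod.fst ⁻¹' {w | LinearIndependent ℝ w} ∩
      cons ⁻¹' {v | ¬LinearIndependent ℝ v}
    have hsplit : cons ⁻¹' {v | ¬LinearIndependent ℝ v} ⊆
        {w | ¬LinearIndependent ℝ w} ×ˢ univ ∪ fresh := by
      intro z hz
      by_cases h : LinearIndependent ℝ z.1
      exacts [Or.inr ⟨h, hz⟩, Or.inl ⟨h, trivial⟩]
    have hslice (w : Fin n → E) : μ (Prod.mk w ⁻¹' fresh) = 0 := by
      by_cases hw : LinearIndependent ℝ w
      · have : Prod.mk w ⁻¹' fresh = Submodule.span ℝ (range w) := by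
          ext x
          simp [fresh, cons, hw, linearIndependent_finCons]
        rw [this]
        exact addHaar_span_range μ (by omega) w
      · simp [fresh, hw]
    refine measure_mono_null hsplit (measure_union_null ?_ ?_)
    · rw [prod_prod, ih (by omega), zero_mul]
    · refine measure_prod_null_of_ae_null ?_ (.of_forall hslice)
      exact (measurable_fst isOpen_setOfPred_linearIndependent.measurableSet).inter
        (hcons.measurable measurableSet_setOf_not_linearIndependent)

theorem pi_setOf_mem_affineSpan_eq_zero {n : ℕ} (hn : n ≤ Module.finrank ℝ E) (p : E) :
    Measure.pi (fun _ : Fin n => μ) {A | p ∈ affineSpan ℝ (range A)} = 0 := by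
  refine measure_mono_null (fun A hA => not_linearIndependent_sub_of_mem_affineSpan hA)
    (?_ : Measure.pi (fun _ : Fin n => μ)
      ((· - fun _ => p) ⁻¹' {v | ¬LinearIndependent ℝ v}) = 0)
  simp_rw [sub_eq_add_neg]
  rw [measure_preimage_add_right]
  exact pi_setOf_not_linearIndependent_eq_zero μ hn

theorem pi_setOf_convexHull_subset_sdiff_countable {n : ℕ} (hn : n ≤ Module.finrank ℝ E)
    {K Q : Set E} (hK : Convex ℝ K) (hQ : Q.Countable) :
    Measure.pi (fun _ : Fin n => μ) {A | convexHull ℝ (range A) ⊆ K \ Q} =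
      Measure.pi (fun _ : Fin n => μ) (univ.pi fun _ => K) := by
  set N := ⋃ p ∈ Q, {A : Fin n → E | p ∈ affineSpan ℝ (range A)}
  have hN : Measure.pi (fun _ : Fin n => μ) N = 0 :=
    (measure_biUnion_null_iff hQ).2 fun p _ => pi_setOf_mem_affineSpan_eq_zero μ hn p
  refine le_antisymm (measure_mono fun A hA i _ => (hA (subset_convexHull ℝ _ ⟨i, rfl⟩)).1) ?_
  rw [← measure_sdiff_null hN]
  refine measure_mono fun A ⟨hAK, hAN⟩ x hx => ⟨?_, fun hxQ => ?_⟩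
  · exact convexHull_min (range_subset_iff.2 fun i => hAK i trivial) hK hx
  · exact hAN (mem_biUnion hxQ (convexHull_subset_affineSpan _ hx))

end Measure

end MeasureTheory

theorem hull_k_full_measure_general (d k : ℕ) (hkd : k < d) :
    volume {A : Fin (k + 1) → (Fin d → ℝ) |
      (∀ i, A i ∈ Set.Icc (0 : Fin d → ℝ) 1 \ {x | ∀ j, ∃ q : ℚ, x j = (q : ℝ)}) ∧
      convexHull ℝ (Set.range A) ⊆
        Set.Icc (0 : Fin d → ℝ) 1 \ {x | ∀ j, ∃ q : ℚ, x j = (q : ℝ)}} = 1 := by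
  set Q : Set (Fin d → ℝ) := {x | ∀ j, ∃ q : ℚ, x j = (q : ℝ)}
  have hQ : Q.Countable := by
    refine (countable_univ_pi fun _ => countable_range ((↑) : ℚ → ℝ)).mono ?_
    exact fun x hx j _ => (hx j).imp fun _ => Eq.symm
  have hvertices : ∀ A : Fin (k + 1) → (Fin d → ℝ), convexHull ℝ (range A) ⊆ Icc 0 1 \ Q →
      ∀ i, A i ∈ Icc 0 1 \ Q := fun A hA i => hA (subset_convexHull ℝ _ ⟨i, rfl⟩)
  simp_rw [fun A => and_iff_right_of_imp (hvertices A)]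
  rw [volume_pi, Measure.pi_setOf_convexHull_subset_sdiff_countable volume
    (by rwa [Module.finrank_fin_fun]) (convex_Icc 0 1) hQ, Measure.pi_pi, Real.volume_Icc_pi]
  simp

/-- For `1 ≤ k < d` and `S = [0,1]ᵈ \ ℚᵈ`, the `k`-simplex set has full
measure in `S^{k+1}`; since `λ(S) = 1`, the `k`-index of convexity equals `1`. -/
theorem hull_k_full_measure (d k : ℕ) (hk : 1 ≤ k) (hkd : k < d) :
    volume {A : Fin (k + 1) → (Fin d → ℝ) |
      (∀ i, A i ∈ Set.Icc (0 : Fin d → ℝ) 1 \ {x | ∀ j, ∃ q : ℚ, x j = (q : ℝ)}) ∧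
      convexHull ℝ (Set.range A) ⊆
        Set.Icc (0 : Fin d → ℝ) 1 \ {x | ∀ j, ∃ q : ℚ, x j = (q : ℝ)}} = 1 :=
  hull_k_full_measure_general d k hkd
end

section
/- Let n be a positive integer and N be a set of n points in the open unit square (0,1)². Then the set S = (0,1)² \ N satisfies b₂(S) ≥ 1/(2n), where b₂(S) is the probability that the convex hull of three points chosen uniformly independently at random from S is contained in S. -/
/-!
Fix the first vertex `z ∉ N`. The `n` lines through `z` and the points of `N` cut the plane into
at most `2n` open sectors: a new line through `z` splits at most two of the existing sectors,
namely those containing its two rays. If the other two vertices lie in the same sector, then for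
every `p ∈ N` the triangle lies on one side of the line `zp` and touches it only at `z`, so it
misses `p`. By Cauchy–Schwarz, two independent uniform points of a convex set `K` fall into a
common sector with probability at least `1 / (2n)`; integrating over `z` gives
`λ(K)³ ≤ 2n · λ₆{triangles in K \ N}`.
-/

open MeasureTheory Finset
open scoped ENNReal

theorem ENNReal.sq_sum_le_card_mul_sum_sq {ι : Type*} (s : Finset ι) (f : ι → ℝ≥0∞) :
    (∑ i ∈ s, f i) ^ 2 ≤ #s * ∑ i ∈ s, f i ^ 2 := by
  by_cases hf : ∀ i ∈ s, f i ≠ ∞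
  · have hcoe : ∀ i ∈ s, f i = (f i).toNNReal := fun i hi => (ENNReal.coe_toNNReal (hf i hi)).symm
    have hsq : ∑ i ∈ s, f i ^ 2 = ∑ i ∈ s, ((f i).toNNReal : ℝ≥0∞) ^ 2 :=
      sum_congr rfl fun i hi => by rw [← hcoe i hi]
    rw [sum_congr rfl hcoe, hsq]
    exact_mod_cast _root_.sq_sum_le_card_mul_sum_sq (s := s) (f := fun i => (f i).toNNReal)
  · push Not at hf
    obtain ⟨i, hi, hfi⟩ := hf
    have hs : (#s : ℝ≥0∞) ≠ 0 := Nat.cast_ne_zero.mpr (card_ne_zero_of_mem hi)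
    rw [ENNReal.mul_eq_top.mpr (.inl ⟨hs, ?_⟩)]
    · exact le_top
    · exact ENNReal.sum_eq_top.mpr ⟨i, hi, by simp [hfi]⟩

theorem setLIntegral_measure_le_prod {α β : Type*} [MeasurableSpace α] [MeasurableSpace β]
    (μ : Measure α) (ν : Measure β) [SFinite ν]
    {S : Set α} (hS : MeasurableSet S) (t : α → Set β) :
    ∫⁻ x in S, ν (t x) ∂μ ≤ μ.prod ν {p | p.1 ∈ S ∧ p.2 ∈ t p.1} := by
  set U := {p : α × β | p.1 ∈ S ∧ p.2 ∈ t p.1}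
  calc ∫⁻ x in S, ν (t x) ∂μ = ∫⁻ x in S, ν (Prod.mk x ⁻¹' U) ∂μ :=
        setLIntegral_congr_fun hS fun x hx => by simp [U, hx]
    _ ≤ ∫⁻ x, ν (Prod.mk x ⁻¹' toMeasurable (μ.prod ν) U) ∂μ :=
        (setLIntegral_le_lintegral _ _).trans <| lintegral_mono fun x =>
          measure_mono <| Set.preimage_mono <| subset_toMeasurable _ _
    _ = μ.prod ν U := by
        rw [← Measure.prod_apply (measurableSet_toMeasurable _ _), measure_toMeasurable]

/-- Cauchy–Schwarz over the fibres of `φ`. -/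
theorem measure_sq_le_card_mul_prod_sameFiber {X γ : Type*} [MeasurableSpace X] (μ : Measure X)
    [SFinite μ] (φ : X → γ) {R : Set X} {T : Finset γ} (hφ : Set.MapsTo φ R T)
    (hmeas : ∀ a ∈ T, MeasurableSet {x ∈ R | φ x = a}) :
    μ R ^ 2 ≤ #T * μ.prod μ {p | p.1 ∈ R ∧ p.2 ∈ R ∧ φ p.1 = φ p.2} := by
  set C : γ → Set X := fun a => {x ∈ R | φ x = a}
  have hdisj : (T : Set γ).PairwiseDisjoint C := fun a _ b _ hab =>
    Set.disjoint_left.mpr fun x hxa hxb => hab (hxa.2.symm.trans hxb.2)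
  have hR : R = ⋃ a ∈ T, C a := by
    ext x
    simpa [C] using fun hx => hφ hx
  calc μ R ^ 2 = (∑ a ∈ T, μ (C a)) ^ 2 := by rw [hR, measure_biUnion_finset hdisj hmeas]
    _ ≤ #T * ∑ a ∈ T, μ (C a) ^ 2 := ENNReal.sq_sum_le_card_mul_sum_sq T _
    _ = #T * μ.prod μ (⋃ a ∈ T, C a ×ˢ C a) := by
        rw [measure_biUnion_finset
          (fun a ha b hb hab => Set.disjoint_prod.mpr (.inl (hdisj ha hb hab)))
          fun a ha => (hmeas a ha).prod (hmeas a ha)]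
        simp only [C, Measure.prod_prod, sq]
    _ ≤ #T * μ.prod μ {p | p.1 ∈ R ∧ p.2 ∈ R ∧ φ p.1 = φ p.2} := by
        gcongr
        simp only [Set.iUnion_subset_iff]
        rintro a - ⟨x, y⟩ ⟨⟨hx, rfl⟩, ⟨hy, hxy⟩⟩
        exact ⟨hx, hy, hxy.symm⟩

theorem volume_setOf_finThree_mem {α : Type*} [MeasureSpace α]
    [SigmaFinite (volume : Measure α)] (U : Set (α × α × α)) :
    volume {A : Fin 3 → α | (A 0, A 1, A 2) ∈ U} = volume U := by
  let e := (MeasurableEquiv.piFinSuccAbove (fun _ : Fin 3 => α) 0).trans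
    (MeasurableEquiv.prodCongr (MeasurableEquiv.refl α) (MeasurableEquiv.piFinTwo fun _ => α))
  have he : MeasurePreserving e volume volume :=
    ((MeasurePreserving.id volume).prod (measurePreserving_piFinTwo fun _ => volume)).comp
      (measurePreserving_piFinSuccAbove (fun _ => volume) 0)
  exact he.measure_preimage_equiv U

section SignPatterns

variable {ι E : Type*} [AddCommGroup E] [Module ℝ E]
  (ℓ : ι → E →ₗ[ℝ] ℝ) (s : Finset ι)

noncomputable def signSet (u : E) : Finset ι := s.filter fun i => 0 < ℓ i u

def IsGeneric (u : E) : Prop := ∀ i ∈ s, ℓ i u ≠ 0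

def signCell (F : Finset ι) : Set E := {u | IsGeneric ℓ s u ∧ signSet ℓ s u = F}

open Classical in
noncomputable def signPatterns : Finset (Finset ι) :=
  s.powerset.filter fun F => (signCell ℓ s F).Nonempty

variable {ℓ s}

theorem mem_signPatterns {F : Finset ι} :
    F ∈ signPatterns ℓ s ↔ (signCell ℓ s F).Nonempty := by
  classical
  simp only [signPatterns, mem_filter, mem_powerset, and_iff_right_iff_imp]
  rintro ⟨u, -, rfl⟩
  exact filter_subset _ _

theorem subset_of_mem_signPatterns {F : Finset ι} (hF : F ∈ signPatterns ℓ s) : F ⊆ s := by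
  classical
  exact mem_powerset.mp (mem_filter.mp hF).1

theorem signSet_mem_signPatterns {u : E} (hu : IsGeneric ℓ s u) :
    signSet ℓ s u ∈ signPatterns ℓ s :=
  mem_signPatterns.mpr ⟨u, hu, rfl⟩

theorem pos_iff_pos_of_signSet_eq {u v : E} (h : signSet ℓ s u = signSet ℓ s v) {i : ι}
    (hi : i ∈ s) : 0 < ℓ i u ↔ 0 < ℓ i v := by
  simpa [signSet, hi] using congrArg (i ∈ ·) h

theorem signCell_eq_biInter [DecidableEq ι] {F : Finset ι} (hF : F ⊆ s) :
    signCell ℓ s F = ⋂ i ∈ s, {u | if i ∈ F then 0 < ℓ i u else ℓ i u < 0} := by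
  ext u
  simp only [signCell, IsGeneric, signSet, Set.mem_ofPred_eq, Set.mem_iInter, Finset.ext_iff,
    mem_filter]
  constructor
  · rintro ⟨hgen, hF'⟩ i hi
    have := hF' i
    split_ifs with hiF
    · exact (this.mpr hiF).2
    · exact lt_of_le_of_ne (not_lt.mp fun h => hiF (this.mp ⟨hi, h⟩)) (hgen i hi)
  · intro h
    refine ⟨fun i hi => ?_, fun i => ⟨fun ⟨hi, hpos⟩ => ?_, fun hiF => ⟨hF hiF, ?_⟩⟩⟩
    · have := h i hi
      split_ifs at this <;> [exact this.ne'; exact this.ne]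
    · have := h i hi
      split_ifs at this with hiF
      · exact hiF
      · exact absurd hpos (not_lt.mpr this.le)
    · simpa [hiF] using h i (hF hiF)

theorem convex_signCell [DecidableEq ι] {F : Finset ι} (hF : F ⊆ s) :
    Convex ℝ (signCell ℓ s F) := by
  rw [signCell_eq_biInter hF]
  refine convex_iInter₂ fun i _ => ?_
  split_ifs
  · exact convex_halfSpace_gt (ℓ i).isLinear 0
  · exact convex_halfSpace_lt (ℓ i).isLinear 0

theorem signCell_insert_subset [DecidableEq ι] {a : ι} (ha : a ∉ s) (G : Finset ι) :
    signCell ℓ (insert a s) G ⊆ signCell ℓ s (G.erase a) := by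
  rintro u ⟨hgen, rfl⟩
  refine ⟨fun i hi => hgen i (mem_insert_of_mem hi), ?_⟩
  ext i
  by_cases hia : i = a
  · subst hia; simp [signSet, ha]
  · simp [signSet, hia]

theorem signSet_smul {c : ℝ} (hc : 0 < c) (u : E) : signSet ℓ s (c • u) = signSet ℓ s u := by
  simp [signSet, mul_pos_iff_of_pos_left hc]

theorem exists_mem_signCell_eq_zero [DecidableEq ι] {F : Finset ι} {f : E →ₗ[ℝ] ℝ} {u₁ u₂ : E}
    (h₁ : u₁ ∈ signCell ℓ s F) (h₂ : u₂ ∈ signCell ℓ s F) (hf₁ : f u₁ < 0) (hf₂ : 0 < f u₂) :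
    ∃ u ∈ signCell ℓ s F, f u = 0 := by
  have hF : F ⊆ s := h₁.2 ▸ filter_subset _ _
  have hd : 0 < f u₂ - f u₁ := by linarith
  refine ⟨(f u₂ / (f u₂ - f u₁)) • u₁ + (-f u₁ / (f u₂ - f u₁)) • u₂,
    convex_signCell hF h₁ h₂ (by positivity) (div_nonneg (by linarith) hd.le)
      (by field_simp; ring), ?_⟩
  simp only [map_add, map_smul, smul_eq_mul]
  field_simp
  ring

/-- A sign pattern of `s` realized on both sides of the kernel of `ℓ a` is realized on the
kernel itself, which is the line `ℝ k`. -/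
theorem mem_pair_of_mem_signPatterns_insert [DecidableEq ι] {a : ι} (ha : a ∉ s) {k : E}
    (hk : ∀ u, ℓ a u = 0 → ∃ c : ℝ, u = c • k) {F : Finset ι}
    (hF : F ∈ signPatterns ℓ (insert a s)) (hFa : a ∉ F)
    (hF' : insert a F ∈ signPatterns ℓ (insert a s)) :
    F ∈ ({signSet ℓ s k, signSet ℓ s (-k)} : Finset (Finset ι)) := by
  obtain ⟨u₁, hu₁⟩ := mem_signPatterns.mp hF
  obtain ⟨u₂, hu₂⟩ := mem_signPatterns.mp hF'
  have hneg : ℓ a u₁ < 0 := by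
    rw [signCell_eq_biInter (subset_of_mem_signPatterns hF)] at hu₁
    simpa [hFa] using Set.mem_iInter₂.mp hu₁ a (mem_insert_self a s)
  have hpos : 0 < ℓ a u₂ := by
    rw [signCell_eq_biInter (subset_of_mem_signPatterns hF')] at hu₂
    simpa using Set.mem_iInter₂.mp hu₂ a (mem_insert_self a s)
  have h₁ := signCell_insert_subset ha F hu₁
  have h₂ := signCell_insert_subset ha _ hu₂
  rw [erase_eq_of_notMem hFa] at h₁
  rw [erase_insert hFa] at h₂
  obtain ⟨u, ⟨hgen, rfl⟩, hu⟩ := exists_mem_signCell_eq_zero h₁ h₂ hneg hpos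
  obtain ⟨c, rfl⟩ := hk u hu
  rcases lt_trichotomy c 0 with hc | rfl | hc
  · rw [← neg_neg c, neg_smul, ← smul_neg, signSet_smul (neg_pos.mpr hc)]
    simp
  · have : s = ∅ := eq_empty_of_forall_notMem fun i hi => hgen i hi (by simp)
    simp [signSet, this]
  · simp [signSet_smul hc]

theorem card_signPatterns_insert_le [DecidableEq ι] {a : ι} (ha : a ∉ s) {k : E}
    (hk : ∀ u, ℓ a u = 0 → ∃ c : ℝ, u = c • k) :
    #(signPatterns ℓ (insert a s)) ≤ #(signPatterns ℓ s) + 2 := by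
  set P := signPatterns ℓ (insert a s)
  set A := P.filter (a ∉ ·)
  set B := (P.filter (a ∈ ·)).image (·.erase a)
  have hsub : A ∪ B ⊆ signPatterns ℓ s := by
    refine union_subset (fun F hF => ?_) (fun F hF => ?_)
    · obtain ⟨hFP, hFa⟩ := mem_filter.mp hF
      obtain ⟨u, hu⟩ := mem_signPatterns.mp hFP
      rw [← erase_eq_of_notMem hFa]
      exact mem_signPatterns.mpr ⟨u, signCell_insert_subset ha F hu⟩
    · obtain ⟨G, hG, rfl⟩ := mem_image.mp hF
      obtain ⟨u, hu⟩ := mem_signPatterns.mp (mem_filter.mp hG).1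
      exact mem_signPatterns.mpr ⟨u, signCell_insert_subset ha G hu⟩
  have hinter : A ∩ B ⊆ {signSet ℓ s k, signSet ℓ s (-k)} := by
    intro F hF
    obtain ⟨hFA, hFB⟩ := mem_inter.mp hF
    obtain ⟨hFP, hFa⟩ := mem_filter.mp hFA
    obtain ⟨G, hG, rfl⟩ := mem_image.mp hFB
    obtain ⟨hGP, hGa⟩ := mem_filter.mp hG
    exact mem_pair_of_mem_signPatterns_insert ha hk hFP hFa (by rwa [insert_erase hGa])
  have hB : #B = #(P.filter (a ∈ ·)) :=
    card_image_of_injOn fun G hG G' hG' h => by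
      rw [← insert_erase (mem_filter.mp hG).2, ← insert_erase (mem_filter.mp hG').2]
      exact congrArg (insert a) h
  calc #P = #A + #B := by rw [hB, add_comm, card_filter_add_card_filter_not (a ∈ ·)]
    _ = #(A ∪ B) + #(A ∩ B) := (card_union_add_card_inter A B).symm
    _ ≤ #(signPatterns ℓ s) + 2 :=
        add_le_add (card_le_card hsub) ((card_le_card hinter).trans card_le_two)

theorem exists_smul_of_apply_eq_zero (hE : Module.finrank ℝ E = 2) {f : E →ₗ[ℝ] ℝ}
    (hf : f ≠ 0) : ∃ k : E, ∀ u, f u = 0 → ∃ c : ℝ, u = c • k := by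
  have : FiniteDimensional ℝ E := Module.finite_of_finrank_eq_succ hE
  have hker : Module.finrank ℝ (LinearMap.ker f) = 1 := by
    have := Module.Dual.finrank_ker_add_one_of_ne_zero hf
    omega
  obtain ⟨k, -, hk⟩ := finrank_eq_one_iff'.mp hker
  refine ⟨k, fun u hu => ?_⟩
  obtain ⟨c, hc⟩ := hk ⟨u, hu⟩
  exact ⟨c, by simpa using (congrArg Subtype.val hc).symm⟩

theorem card_signPatterns_le (hE : Module.finrank ℝ E = 2) (hs : s.Nonempty)
    (hℓ : ∀ i ∈ s, ℓ i ≠ 0) : #(signPatterns ℓ s) ≤ 2 * #s := by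
  classical
  induction hs using Finset.Nonempty.cons_induction with
  | singleton a =>
    calc #(signPatterns ℓ {a}) ≤ #(({a} : Finset ι).powerset) := card_le_card (filter_subset _ _)
      _ = 2 * #{a} := by simp
  | cons a s ha _ ih =>
    obtain ⟨k, hk⟩ := exists_smul_of_apply_eq_zero hE (hℓ a (mem_cons_self a s))
    rw [cons_eq_insert, card_insert_of_notMem ha]
    linarith [card_signPatterns_insert_le ha hk, ih fun i hi => hℓ i (mem_cons_of_mem hi)]

end SignPatterns

theorem measurableSet_signCell {ι E : Type*} [DecidableEq ι] [NormedAddCommGroup E]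
    [NormedSpace ℝ E] [FiniteDimensional ℝ E] [MeasurableSpace E] [BorelSpace E]
    (ℓ : ι → E →ₗ[ℝ] ℝ) {s F : Finset ι} (hF : F ⊆ s) : MeasurableSet (signCell ℓ s F) := by
  rw [signCell_eq_biInter hF]
  refine MeasurableSet.biInter s.countable_toSet fun i _ => ?_
  have hℓ : Measurable (ℓ i) := (ℓ i).continuous_of_finiteDimensional.measurable
  split_ifs
  · exact measurableSet_lt measurable_const hℓ
  · exact measurableSet_lt hℓ measurable_const


theorem addHaar_setOf_apply_sub_eq_zero {E : Type*} [NormedAddCommGroup E] [NormedSpace ℝ E]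
    [MeasurableSpace E] [BorelSpace E] [FiniteDimensional ℝ E] (μ : Measure E)
    [μ.IsAddHaarMeasure] {g : E →ₗ[ℝ] ℝ} (hg : g ≠ 0) (z : E) : μ {w | g (w - z) = 0} = 0 := by
  have : {w | g (w - z) = 0} = (· + -z) ⁻¹' (LinearMap.ker g : Set E) := by
    ext; simp [sub_eq_add_neg]
  rw [this, measure_preimage_add_right, Measure.addHaar_submodule μ _ (by simpa using hg)]


theorem convex_insert_setOf_pos {E : Type*} [AddCommGroup E] [Module ℝ E] (g : E →ₗ[ℝ] ℝ)
    (z : E) : Convex ℝ (insert z {x | 0 < g (x - z)}) := by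
  intro x hx y hy a b ha hb hab
  have hg : g (a • x + b • y - z) = a * g (x - z) + b * g (y - z) := by
    simp only [map_sub, map_add, map_smul, smul_eq_mul]
    linear_combination g z * hab
  have key : ∀ {c : ℝ} {w : E}, 0 ≤ c → w ∈ insert z {x | 0 < g (x - z)} →
      0 ≤ c * g (w - z) ∧ (c * g (w - z) = 0 → c • w = c • z) := by
    rintro c w hc (rfl | hw)
    · simp
    · refine ⟨mul_nonneg hc (le_of_lt hw), fun h => ?_⟩
      rw [(mul_eq_zero.mp h).resolve_right (ne_of_gt hw), zero_smul, zero_smul]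
  obtain ⟨hx₀, hx₁⟩ := key ha hx
  obtain ⟨hy₀, hy₁⟩ := key hb hy
  rcases (add_nonneg hx₀ hy₀).lt_or_eq with h | h
  · exact Or.inr (by rw [Set.mem_ofPred_eq, hg]; exact h)
  · left
    rw [hx₁ (by linarith), hy₁ (by linarith), ← add_smul, hab, one_smul]

theorem notMem_convexHull_insert {E : Type*} [AddCommGroup E] [Module ℝ E] (g : E →ₗ[ℝ] ℝ)
    {z p : E} {s : Set E} (hs : ∀ x ∈ s, 0 < g (x - z)) (hp : g (p - z) = 0) (hpz : p ≠ z) :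
    p ∉ convexHull ℝ (insert z s) := fun h => by
  rcases convexHull_min (Set.insert_subset_insert hs) (convex_insert_setOf_pos g z) h with h | h
  · exact hpz h
  · exact (ne_of_gt h) hp

def wedge (v : ℝ × ℝ) : ℝ × ℝ →ₗ[ℝ] ℝ := v.1 • LinearMap.snd ℝ ℝ ℝ - v.2 • LinearMap.fst ℝ ℝ ℝ

@[simp] theorem wedge_apply (v w : ℝ × ℝ) : wedge v w = v.1 * w.2 - v.2 * w.1 := by
  simp [wedge]

theorem wedge_self (v : ℝ × ℝ) : wedge v v = 0 := by
  simp [mul_comm]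

theorem wedge_ne_zero {v : ℝ × ℝ} (hv : v ≠ 0) : wedge v ≠ 0 := fun h => hv <| by
  have h₁ := LinearMap.congr_fun h (0, 1)
  have h₂ := LinearMap.congr_fun h (1, 0)
  simp at h₁ h₂
  ext <;> simp [h₁, h₂]


section Plane

variable (K : Set (ℝ × ℝ)) (N : Finset (ℝ × ℝ)) (z : ℝ × ℝ)

/-- Its kernel is the direction of the line through `z` and `p`. -/
def lineForm (p : ℝ × ℝ) : ℝ × ℝ →ₗ[ℝ] ℝ := wedge (p - z)

def offLines : Set (ℝ × ℝ) := {w ∈ K | IsGeneric (lineForm z) N (w - z)}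

def sameSidePairs : Set ((ℝ × ℝ) × (ℝ × ℝ)) :=
  {y | y.1 ∈ offLines K N z ∧ y.2 ∈ offLines K N z ∧
    signSet (lineForm z) N (y.1 - z) = signSet (lineForm z) N (y.2 - z)}

def hullTriples (S : Set (ℝ × ℝ)) : Set (Fin 3 → ℝ × ℝ) :=
  {A | (∀ i, A i ∈ S) ∧ convexHull ℝ (Set.range A) ⊆ S}

variable {K N z}

theorem volume_offLines (hz : z ∉ N) : volume (offLines K N z) = volume K := by
  have : offLines K N z = K \ ⋃ p ∈ N, {w | lineForm z p (w - z) = 0} := by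
    ext; simp [offLines, IsGeneric]
  rw [this, measure_sdiff_null]
  refine (measure_biUnion_null_iff N.countable_toSet).mpr fun p hp => ?_
  exact addHaar_setOf_apply_sub_eq_zero volume
    (wedge_ne_zero (sub_ne_zero.mpr (ne_of_mem_of_not_mem hp hz))) z

theorem volume_sq_le_mul_volume_sameSidePairs (hK : MeasurableSet K) (hN : N.Nonempty)
    (hz : z ∉ N) : volume K ^ 2 ≤ 2 * #N * volume (sameSidePairs K N z) := by
  classical
  have hcard : #(signPatterns (lineForm z) N) ≤ 2 * #N :=
    card_signPatterns_le (by simp) hN fun p hp =>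
      wedge_ne_zero (sub_ne_zero.mpr (ne_of_mem_of_not_mem hp hz))
  rw [← volume_offLines hz, Measure.volume_eq_prod]
  calc volume (offLines K N z) ^ 2
      ≤ #(signPatterns (lineForm z) N) * (volume.prod volume) (sameSidePairs K N z) := by
        refine measure_sq_le_card_mul_prod_sameFiber volume
          (fun w => signSet (lineForm z) N (w - z)) (fun w hw => signSet_mem_signPatterns hw.2)
          fun F hF => ?_
        have hcell : {w | w ∈ offLines K N z ∧ signSet (lineForm z) N (w - z) = F} =
            K ∩ (· - z) ⁻¹' signCell (lineForm z) N F := by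
          ext w
          simp only [offLines, signCell, Set.mem_ofPred_eq, Set.mem_inter_iff, Set.mem_preimage,
            and_assoc]
        rw [hcell]
        exact hK.inter <| (measurableSet_signCell _ (subset_of_mem_signPatterns hF)).preimage
          (measurable_sub_const z)
    _ ≤ 2 * #N * (volume.prod volume) (sameSidePairs K N z) := by gcongr; exact_mod_cast hcard

theorem convexHull_subset_diff_of_sameSidePairs (hK : Convex ℝ K) {A : Fin 3 → ℝ × ℝ}
    (h₀ : A 0 ∈ K \ N) (h : (A 1, A 2) ∈ sameSidePairs K N (A 0)) :
    convexHull ℝ (Set.range A) ⊆ K \ N := by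
  obtain ⟨⟨h₁, hg₁⟩, ⟨h₂, hg₂⟩, hsame⟩ := h
  have htail : ∀ x ∈ Set.range (Fin.tail A), x = A 1 ∨ x = A 2 := by
    rintro _ ⟨j, rfl⟩
    fin_cases j <;> simp [Fin.tail]
  rw [Fin.range_fin_succ]
  refine Set.subset_sdiff.mpr ⟨convexHull_min ?_ hK, Set.disjoint_right.mpr fun p hp => ?_⟩
  · refine Set.insert_subset h₀.1 fun x hx => ?_
    rcases htail x hx with rfl | rfl <;> assumption
  have hp0 : lineForm (A 0) p (p - A 0) = 0 := wedge_self _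
  have hpz : p ≠ A 0 := ne_of_mem_of_not_mem hp h₀.2
  have hiff := pos_iff_pos_of_signSet_eq hsame hp
  by_cases hpos : 0 < lineForm (A 0) p (A 1 - A 0)
  · refine notMem_convexHull_insert _ (fun x hx => ?_) hp0 hpz
    rcases htail x hx with rfl | rfl
    exacts [hpos, hiff.mp hpos]
  · refine notMem_convexHull_insert (-lineForm (A 0) p) (fun x hx => ?_) (by simp [hp0]) hpz
    have hneg₂ := hiff.not.mp hpos
    rcases htail x hx with rfl | rfl
    · exact neg_pos.mpr (lt_of_le_of_ne (not_lt.mp hpos) (hg₁ p hp))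
    · exact neg_pos.mpr (lt_of_le_of_ne (not_lt.mp hneg₂) (hg₂ p hp))

theorem volume_pow_three_le_mul_volume_hullTriples (hKc : Convex ℝ K) (hK : MeasurableSet K)
    (hN : N.Nonempty) : volume K ^ 3 ≤ 2 * #N * volume (hullTriples (K \ N)) := by
  have hS : MeasurableSet (K \ N) := hK.diff N.finite_toSet.measurableSet
  have hSvol : volume (K \ N) = volume K := measure_sdiff_null (N.finite_toSet.measure_zero _)
  set U := {x : (ℝ × ℝ) × (ℝ × ℝ) × (ℝ × ℝ) | x.1 ∈ K \ N ∧ x.2 ∈ sameSidePairs K N x.1}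
  calc volume K ^ 3 = ∫⁻ _ in K \ N, volume K ^ 2 := by rw [setLIntegral_const, hSvol]; ring
    _ ≤ ∫⁻ z in K \ N, 2 * #N * volume (sameSidePairs K N z) :=
        setLIntegral_mono' hS fun z hz => volume_sq_le_mul_volume_sameSidePairs hK hN hz.2
    _ = 2 * #N * ∫⁻ z in K \ N, volume (sameSidePairs K N z) :=
        lintegral_const_mul' _ _ (by finiteness)
    _ ≤ 2 * #N * volume U := by
        rw [Measure.volume_eq_prod]
        gcongr
        exact setLIntegral_measure_le_prod _ _ hS _
    _ ≤ 2 * #N * volume (hullTriples (K \ N)) := by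
        rw [← volume_setOf_finThree_mem U]
        gcongr
        rintro A ⟨h₀, h⟩
        have hsub := convexHull_subset_diff_of_sameSidePairs hKc h₀ h
        exact ⟨fun i => hsub (subset_convexHull ℝ _ ⟨i, rfl⟩), hsub⟩

end Plane

theorem unit_square_minus_points_general (n : ℕ) (hn : 0 < n) (N : Finset (ℝ × ℝ))
    (hcard : N.card = n) :
    (1 : ℝ≥0∞) / (2 * n) ≤ volume {A : Fin 3 → ℝ × ℝ |
      (∀ i, A i ∈ (Set.Ioo (0:ℝ) 1 ×ˢ Set.Ioo (0:ℝ) 1) \ ↑N) ∧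
      convexHull ℝ (Set.range A) ⊆ (Set.Ioo (0:ℝ) 1 ×ˢ Set.Ioo (0:ℝ) 1) \ ↑N} := by
  have hsq : volume (Set.Ioo (0:ℝ) 1 ×ˢ Set.Ioo (0:ℝ) 1) = 1 := by
    simp [Measure.volume_eq_prod, Measure.prod_prod]
  have hbound := volume_pow_three_le_mul_volume_hullTriples
    ((convex_Ioo 0 1).prod (convex_Ioo 0 1)) (measurableSet_Ioo.prod measurableSet_Ioo)
    (card_pos.mp (hcard ▸ hn))
  rw [hsq, one_pow, hcard, mul_comm] at hbound
  exact ENNReal.div_le_of_le_mul hbound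

/-- Removing `n` points from the open unit square leaves a set `S` with
`b₂(S) ≥ 1/(2n)` (here `λ(S) = 1`, so `b₂(S)` is just the measure of the 2-simplex set). -/
theorem unit_square_minus_points (n : ℕ) (hn : 0 < n) (N : Finset (ℝ × ℝ))
    (hcard : N.card = n)
    (hN : ↑N ⊆ Set.Ioo (0:ℝ) 1 ×ˢ Set.Ioo (0:ℝ) 1) :
    (1 : ℝ≥0∞) / (2 * n) ≤ volume {A : Fin 3 → ℝ × ℝ |
      (∀ i, A i ∈ (Set.Ioo (0:ℝ) 1 ×ˢ Set.Ioo (0:ℝ) 1) \ ↑N) ∧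
      convexHull ℝ (Set.range A) ⊆ (Set.Ioo (0:ℝ) 1 ×ˢ Set.Ioo (0:ℝ) 1) \ ↑N} :=
  unit_square_minus_points_general n hn N hcard
end

section
/- Let R be a rooted set in ℝ² with root r (an open line segment), and suppose the first level L₁ = vis(r,R) equals R (i.e., every point of R sees some point of r). Then R lies entirely in one of the two closed half-planes determined by the supporting line of r. -/
/-- `A` and `B` can be joined by a polygonal line inside `X`. -/
def PolyConn (X : Set (ℝ × ℝ)) (A B : ℝ × ℝ) : Prop :=
  A ∈ X ∧ B ∈ X ∧ ∃ n, ∃ f : Fin (n + 1) → ℝ × ℝ, f 0 = A ∧ f (Fin.last n) = B ∧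
    ∀ i : Fin n, segment ℝ (f i.castSucc) (f i.succ) ⊆ X

/-- `S` is half-open: each point of `S` has a disc neighborhood either contained in `S`
or split by a diameter into the closed half-disc `S ∩ ball` (including the diameter)
and the open half-disc outside `S`. -/
def IsHalfOpen (S : Set (ℝ × ℝ)) : Prop :=
  ∀ A ∈ S, ∃ ε > 0, Metric.ball A ε ⊆ S ∨
    ∃ f : (ℝ × ℝ) →ₗ[ℝ] ℝ, f ≠ 0 ∧
      Metric.ball A ε ∩ S = {x ∈ Metric.ball A ε | 0 ≤ f (x - A)}

/-- A rooted set `R` with root `r`: bounded, polygonally connected, simply connected,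
half-open, with `R ∩ ∂R = r` an open line segment. -/
def IsRootedSet (R r : Set (ℝ × ℝ)) : Prop :=
  Bornology.IsBounded R ∧ (∀ A ∈ R, ∀ B ∈ R, PolyConn R A B) ∧
    SimplyConnectedSpace R ∧ IsHalfOpen R ∧
    (∃ a b : ℝ × ℝ, a ≠ b ∧ r = openSegment ℝ a b) ∧ R ∩ frontier R = r

/-!
At a point `B` of the root, half-openness makes `R` near `B` a closed half-disc. The root runs
through `B` inside `R`, so the diameter lies along the root line, and near `B` the set `R` is
one of the closed half-planes `{g ≥ c}`, `{g ≤ c}` of the line `g = c` of the root. Each kind of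
root point forms an open set, the two are disjoint, and the root is connected, so one kind, say
`{g ≥ c}`, occurs along the whole root. A point `x ∈ R` sees a root point `C` along a segment
in `R`; the part of that segment near `C` lies in `{g ≥ c}`, hence so does `x`.
-/

open Filter Set Topology

lemma eq_zero_of_eventually_nonneg_mul {a : ℝ} (h : ∀ᶠ t in 𝓝 (0 : ℝ), 0 ≤ t * a) : a = 0 := by
  obtain ⟨t, hta, ht⟩ := ((h.filter_mono nhdsWithin_le_nhds).and self_mem_nhdsWithin).exists
    (f := 𝓝[>] (0 : ℝ))
  obtain ⟨s, hsa, hs⟩ := ((h.filter_mono nhdsWithin_le_nhds).and self_mem_nhdsWithin).exists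
    (f := 𝓝[<] (0 : ℝ))
  have hs : s < 0 := hs
  have ht : 0 < t := ht
  nlinarith

lemma eventually_add_smul_sub_mem_openSegment {E : Type*} [AddCommGroup E] [Module ℝ E]
    {a b B : E} (hB : B ∈ openSegment ℝ a b) :
    ∀ᶠ t in 𝓝 (0 : ℝ), B + t • (b - a) ∈ openSegment ℝ a b := by
  rw [openSegment_eq_image'] at hB ⊢
  obtain ⟨s, hs, rfl⟩ := hB
  have hmem : ∀ᶠ t in 𝓝 (0 : ℝ), s + t ∈ Ioo 0 1 :=
    (continuous_const_add s).continuousAt.preimage_mem_nhds (by simpa using Ioo_mem_nhds hs.1 hs.2)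
  exact hmem.mono fun t ht => ⟨s + t, ht, by simp only [add_smul, add_assoc]⟩

section HalfSpace

variable {E : Type*} [AddCommGroup E] [Module ℝ E] [TopologicalSpace E]

def locallyHalfSpace (S : Set E) (φ : E →ₗ[ℝ] ℝ) (c : ℝ) : Set E :=
  {B | ∀ᶠ x in 𝓝 B, x ∈ S ↔ c ≤ φ x}

lemma isOpen_locallyHalfSpace (S : Set E) (φ : E →ₗ[ℝ] ℝ) (c : ℝ) :
    IsOpen (locallyHalfSpace S φ c) :=
  isOpen_setOfPred_eventually_nhds

variable [ContinuousAdd E] [ContinuousSMul ℝ E]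

lemma tendsto_add_smul_nhds_zero (B e : E) :
    Tendsto (fun t : ℝ => B + t • e) (𝓝 0) (𝓝 B) := by
  simpa using ((continuous_id.smul continuous_const).const_add B).tendsto (0 : ℝ)
    (f := fun t : ℝ => B + t • e)

lemma LinearMap.not_eventually_apply_eq {φ : E →ₗ[ℝ] ℝ} (hφ : φ ≠ 0) (B : E) (c : ℝ) :
    ¬ ∀ᶠ x in 𝓝 B, φ x = c := by
  intro h
  obtain ⟨e, he⟩ : ∃ e, φ e ≠ 0 := by
    by_contra! h0
    exact hφ (LinearMap.ext h0)
  have hline : ∀ᶠ t in 𝓝 (0 : ℝ), φ B + t * φ e = c := by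
    simpa using (tendsto_add_smul_nhds_zero B e).eventually h
  have hB : φ B = c := by simpa using hline.self_of_nhds
  exact he (eq_zero_of_eventually_nonneg_mul (hline.mono fun t ht => by linarith))

lemma apply_eq_zero_of_eventually_mem_iff {S : Set E} {φ : E →ₗ[ℝ] ℝ} {B d : E}
    (hS : ∀ᶠ x in 𝓝 B, x ∈ S ↔ 0 ≤ φ (x - B)) (hd : ∀ᶠ t in 𝓝 (0 : ℝ), B + t • d ∈ S) :
    φ d = 0 := by
  refine eq_zero_of_eventually_nonneg_mul ?_
  filter_upwards [(tendsto_add_smul_nhds_zero B d).eventually hS, hd] with t hiff hmem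
  simpa using hiff.1 hmem

lemma disjoint_locallyHalfSpace_neg (S : Set E) {φ : E →ₗ[ℝ] ℝ} (hφ : φ ≠ 0) (c : ℝ) :
    Disjoint (locallyHalfSpace S φ c) (locallyHalfSpace S (-φ) (-c)) := by
  refine Set.disjoint_left.2 fun B hpos hneg => φ.not_eventually_apply_eq hφ B c ?_
  filter_upwards [hpos, hneg] with x hx hx'
  simp only [LinearMap.neg_apply, neg_le_neg_iff] at hx'
  rcases le_total c (φ x) with h | h
  · exact le_antisymm (hx'.1 (hx.2 h)) h
  · exact le_antisymm h (hx.1 (hx'.2 h))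

lemma le_apply_of_segment_subset {S : Set E} {φ : E →ₗ[ℝ] ℝ} {B x : E}
    (hB : B ∈ locallyHalfSpace S φ (φ B)) (hseg : segment ℝ x B ⊆ S) : φ B ≤ φ x := by
  have hnear : ∀ᶠ t in 𝓝[>] (0 : ℝ), B + t • (x - B) ∈ S → φ B ≤ φ (B + t • (x - B)) :=
    ((tendsto_add_smul_nhds_zero B (x - B)).eventually hB).filter_mono nhdsWithin_le_nhds
      |>.mono fun _ h => h.1
  obtain ⟨t, hle, ht⟩ := (hnear.and (Ioc_mem_nhdsGT one_pos)).exists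
  have hmem : B + t • (x - B) ∈ S :=
    hseg (by rw [segment_symm, segment_eq_image']; exact ⟨t, Ioc_subset_Icc_self ht, rfl⟩)
  have := hle hmem
  simp only [map_add, map_smul, map_sub, smul_eq_mul] at this
  nlinarith [ht.1]

end HalfSpace

/-- The cross product `x ↦ d × x`, whose kernel is the line spanned by `d`. -/
def perpFunctional (d : ℝ × ℝ) : (ℝ × ℝ) →ₗ[ℝ] ℝ :=
  d.1 • LinearMap.snd ℝ ℝ ℝ - d.2 • LinearMap.fst ℝ ℝ ℝ

@[simp]
lemma perpFunctional_apply (d x : ℝ × ℝ) : perpFunctional d x = d.1 * x.2 - d.2 * x.1 := by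
  simp [perpFunctional]

lemma perpFunctional_self (d : ℝ × ℝ) : perpFunctional d d = 0 := by
  simp [mul_comm]

lemma sq_add_sq_pos_of_ne_zero {d : ℝ × ℝ} (hd : d ≠ 0) : 0 < d.1 ^ 2 + d.2 ^ 2 := by
  rcases (not_and_or.1 fun h : d.1 = 0 ∧ d.2 = 0 => hd (Prod.ext h.1 h.2)) with h | h <;>
    positivity

lemma perpFunctional_ne_zero {d : ℝ × ℝ} (hd : d ≠ 0) : perpFunctional d ≠ 0 := by
  intro h
  have := LinearMap.congr_fun h (-d.2, d.1)
  simp only [perpFunctional_apply, LinearMap.zero_apply] at this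
  nlinarith [sq_add_sq_pos_of_ne_zero hd]

lemma exists_eq_smul_perpFunctional {d : ℝ × ℝ} (hd : d ≠ 0) {f : (ℝ × ℝ) →ₗ[ℝ] ℝ}
    (hf : f d = 0) : ∃ c : ℝ, f = c • perpFunctional d := by
  have hn := (sq_add_sq_pos_of_ne_zero hd).ne'
  have hdecomp : ∀ x : ℝ × ℝ, (d.1 ^ 2 + d.2 ^ 2) • x =
      (d.1 * x.1 + d.2 * x.2) • d + perpFunctional d x • (-d.2, d.1) := by
    intro x; ext <;> simp <;> ring
  refine ⟨f (-d.2, d.1) / (d.1 ^ 2 + d.2 ^ 2), LinearMap.ext fun x => ?_⟩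
  have := congrArg f (hdecomp x)
  simp only [map_add, map_smul, hf, smul_eq_mul, mul_zero, zero_add] at this
  simp only [LinearMap.smul_apply, smul_eq_mul]
  field_simp
  linarith

lemma perpFunctional_sub_apply_of_mem_openSegment {a b p : ℝ × ℝ}
    (hp : p ∈ openSegment ℝ a b) : perpFunctional (b - a) p = perpFunctional (b - a) a := by
  rw [openSegment_eq_image'] at hp
  obtain ⟨t, -, rfl⟩ := hp
  rw [map_add, map_smul, perpFunctional_self, smul_zero, add_zero]

lemma IsHalfOpen.exists_eventually_mem_iff {S : Set (ℝ × ℝ)} (hS : IsHalfOpen S) {B : ℝ × ℝ}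
    (hB : B ∈ S ∩ frontier S) :
    ∃ f : (ℝ × ℝ) →ₗ[ℝ] ℝ, f ≠ 0 ∧ ∀ᶠ x in 𝓝 B, x ∈ S ↔ 0 ≤ f (x - B) := by
  obtain ⟨ε, hε, hball | ⟨f, hf, hfS⟩⟩ := hS B hB.1
  · exact absurd (mem_interior_iff_mem_nhds.2 (mem_of_superset (Metric.ball_mem_nhds B hε) hball))
      hB.2.2
  · refine ⟨f, hf, Filter.mem_of_superset (Metric.ball_mem_nhds B hε) fun x hx => ?_⟩
    have := Set.ext_iff.1 hfS x
    simp only [mem_inter_iff, mem_ofPred_eq] at this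
    exact (and_congr_right_iff.1 this) hx

lemma mem_locallyHalfSpace_union_of_mem_root {R : Set (ℝ × ℝ)} (hR : IsHalfOpen R)
    {a b B : ℝ × ℝ} (hab : a ≠ b) (hroot : R ∩ frontier R = openSegment ℝ a b)
    (hB : B ∈ openSegment ℝ a b) :
    B ∈ locallyHalfSpace R (perpFunctional (b - a)) (perpFunctional (b - a) a) ∪
      locallyHalfSpace R (-perpFunctional (b - a)) (-perpFunctional (b - a) a) := by
  have hd : b - a ≠ 0 := sub_ne_zero.2 hab.symm
  obtain ⟨f, hf, hfR⟩ := hR.exists_eventually_mem_iff (hroot ▸ hB)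
  -- the root passes through `B` inside `R`, so the diameter of the half-disc lies along it
  have hline : ∀ᶠ t in 𝓝 (0 : ℝ), B + t • (b - a) ∈ R :=
    (eventually_add_smul_sub_mem_openSegment hB).mono fun _ ht => (hroot ▸ ht).1
  obtain ⟨c, rfl⟩ :=
    exists_eq_smul_perpFunctional hd (apply_eq_zero_of_eventually_mem_iff hfR hline)
  have hc : c ≠ 0 := by rintro rfl; exact hf (zero_smul ℝ _)
  have hfR' : ∀ᶠ x in 𝓝 B, x ∈ R ↔
      0 ≤ c * (perpFunctional (b - a) x - perpFunctional (b - a) a) := by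
    simpa only [LinearMap.smul_apply, map_sub, smul_eq_mul, mul_sub,
      perpFunctional_sub_apply_of_mem_openSegment hB] using hfR
  rcases hc.lt_or_gt with hc | hc
  · refine Or.inr (hfR'.mono fun x hx => ?_)
    rw [hx, ← neg_mul_neg, mul_nonneg_iff_of_pos_left (neg_pos.2 hc), neg_sub, sub_nonneg,
      LinearMap.neg_apply, neg_le_neg_iff]
  · refine Or.inl (hfR'.mono fun x hx => ?_)
    rw [hx, mul_nonneg_iff_of_pos_left hc, sub_nonneg]

lemma exists_halfPlane_of_subset_locallyHalfSpace {R r : Set (ℝ × ℝ)}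
    {φ : (ℝ × ℝ) →ₗ[ℝ] ℝ} (hφ : φ ≠ 0) {c : ℝ} (hr : r ⊆ locallyHalfSpace R φ c)
    (hc : ∀ p ∈ r, φ p = c) (hvis : ∀ A ∈ R, ∃ B ∈ r, segment ℝ A B ⊆ R) :
    ∃ f : (ℝ × ℝ) →ₗ[ℝ] ℝ, f ≠ 0 ∧ (∀ p ∈ r, ∀ q ∈ r, f p = f q) ∧
      ∀ x ∈ R, ∀ p ∈ r, f p ≤ f x := by
  refine ⟨φ, hφ, fun p hp q hq => by rw [hc p hp, hc q hq], fun x hx p hp => ?_⟩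
  obtain ⟨B, hB, hseg⟩ := hvis x hx
  rw [hc p hp, ← hc B hB]
  exact le_apply_of_segment_subset (hc B hB ▸ hr hB) hseg

/-- If `R` is a rooted set with root `r` and every point of `R` sees some
point of `r` in `R`, then `R` lies in one closed half-plane bounded by the supporting
line of `r`. -/
theorem rooted_set_half_plane (R r : Set (ℝ × ℝ)) (hR : IsRootedSet R r)
    (hvis : ∀ A ∈ R, ∃ B ∈ r, segment ℝ A B ⊆ R) :
    ∃ f : (ℝ × ℝ) →ₗ[ℝ] ℝ, f ≠ 0 ∧ (∀ p ∈ r, ∀ q ∈ r, f p = f q) ∧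
      ∀ x ∈ R, ∀ p ∈ r, f p ≤ f x := by
  obtain ⟨-, -, -, hho, ⟨a, b, hab, rfl⟩, hroot⟩ := hR
  set g := perpFunctional (b - a)
  have hg : g ≠ 0 := perpFunctional_ne_zero (sub_ne_zero.2 hab.symm)
  have hga : ∀ p ∈ openSegment ℝ a b, g p = g a := fun p hp =>
    perpFunctional_sub_apply_of_mem_openSegment hp
  rcases (convex_openSegment a b).isPreconnected.subset_or_subset
      (isOpen_locallyHalfSpace R g (g a)) (isOpen_locallyHalfSpace R (-g) (-g a))
      (disjoint_locallyHalfSpace_neg R hg (g a))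
      (fun B hB => mem_locallyHalfSpace_union_of_mem_root hho hab hroot hB) with hup | hdown
  · exact exists_halfPlane_of_subset_locallyHalfSpace hg hup hga hvis
  · exact exists_halfPlane_of_subset_locallyHalfSpace (neg_ne_zero.2 hg) hdown
      (fun p hp => by rw [LinearMap.neg_apply, hga p hp]) hvis
end

section
/- Let T = (A₀,...,A_d) be a tuple of d+1 affinely independent points in ℝᵈ ordered so that [A₀,A₁] realizes the diameter of the point set and, for 2 ≤ i ≤ d−1, the point A_i has maximum distance to the affine hull of {A₀,...,A_{i−1}} among A_i,...,A_d. Then for each i with 1 ≤ i ≤ d−1, the orthogonal projection of every point A_j (0 ≤ j ≤ d) onto aff{A₀,...,A_i} lies within distance d_i of aff{A₀,...,A_{i−1}} in every coordinate of the inductive box construction; in particular, the orthogonal projection of any point of T onto aff{A₀,A₁} lies on the segment [A₀,A₁]. -/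
open Metric
open scoped RealInnerProductSpace

lemma fin_val_one_aux (d : ℕ) (hd : 2 ≤ d) : ((1 : Fin (d + 1)) : ℕ) = 1 := by
  have h : ((1 : Fin (d + 1)) : ℕ) = 1 % (d + 1) := rfl
  rw [h]
  exact Nat.mod_eq_of_lt (by omega)

lemma fin_val_zero_aux (n : ℕ) : ((0 : Fin (n + 1)) : ℕ) = 0 := rfl

/-- Pythagoras inequality: if `a - p ⊥ q - p` then `‖p - q‖ ≤ ‖a - q‖`. -/
lemma pyth_aux {E : Type*} [NormedAddCommGroup E] [InnerProductSpace ℝ E]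
    (a p q : E) (h : ⟪a - p, q - p⟫ = 0) : ‖p - q‖ ≤ ‖a - q‖ := by
  have hin : ⟪a - p, p - q⟫ = 0 := by
    have : p - q = -(q - p) := by abel
    rw [this, inner_neg_right, h, neg_zero]
  have hsum : a - q = (a - p) + (p - q) := by abel
  have hsq : ‖a - q‖ ^ 2 = ‖a - p‖ ^ 2 + ‖p - q‖ ^ 2 := by
    rw [hsum, norm_add_sq_real (a - p) (p - q), hin]; ring
  nlinarith [norm_nonneg (a - p), norm_nonneg (p - q), norm_nonneg (a - q)]

/-- Key lemma: the foot of the perpendicular from any point of the configuration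
onto the line `aff{A₀, A₁}` lies on the segment `[A₀, A₁]`. -/
lemma key_aux (d : ℕ) (hd : 2 ≤ d)
    (A : Fin (d + 1) → EuclideanSpace ℝ (Fin d))
    (hind : AffineIndependent ℝ A)
    (hdiam : ∀ j k, dist (A j) (A k) ≤ dist (A 0) (A 1))
    (j : Fin (d + 1)) (p : EuclideanSpace ℝ (Fin d))
    (hp : p ∈ affineSpan ℝ ({A 0, A 1} : Set (EuclideanSpace ℝ (Fin d))))
    (horth : ∀ q ∈ (affineSpan ℝ ({A 0, A 1} : Set (EuclideanSpace ℝ (Fin d))) :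
        Set (EuclideanSpace ℝ (Fin d))), ⟪A j - p, q - p⟫ = 0) :
    ∃ t : ℝ, 0 ≤ t ∧ t ≤ 1 ∧ p = (1 - t) • A 0 + t • A 1 := by
  have hv1 : ((1 : Fin (d + 1)) : ℕ) = 1 := fin_val_one_aux d hd
  have hne : A 0 ≠ A 1 := by
    intro h
    have h2 := congrArg Fin.val (hind.injective h)
    simp only [Fin.val_zero, hv1] at h2
    exact one_ne_zero h2.symm
  have hL : 0 < ‖A 1 - A 0‖ := by
    rw [norm_sub_pos_iff]; exact fun h => hne h.symm
  -- extract the parameter t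
  have hp' : (p - A 0) +ᵥ A 0 ∈ affineSpan ℝ ({A 0, A 1} : Set (EuclideanSpace ℝ (Fin d))) := by
    simpa using hp
  rw [vadd_left_mem_affineSpan_pair] at hp'
  obtain ⟨t, ht⟩ := hp'
  have hpt : p = A 0 + t • (A 1 - A 0) := by
    have : t • (A 1 - A 0) = p - A 0 := by simpa using ht
    rw [this]; abel
  -- distances from p to A 0 and A 1
  have hpA0 : ‖p - A 0‖ = |t| * ‖A 1 - A 0‖ := by
    rw [hpt]
    have : A 0 + t • (A 1 - A 0) - A 0 = t • (A 1 - A 0) := by abel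
    rw [this, norm_smul, Real.norm_eq_abs]
  have hpA1 : ‖p - A 1‖ = |t - 1| * ‖A 1 - A 0‖ := by
    rw [hpt]
    have : A 0 + t • (A 1 - A 0) - A 1 = (t - 1) • (A 1 - A 0) := by
      rw [sub_smul, one_smul]; abel
    rw [this, norm_smul, Real.norm_eq_abs]
  have h0 : ‖p - A 0‖ ≤ ‖A j - A 0‖ :=
    pyth_aux (A j) p (A 0) (horth (A 0) (left_mem_affineSpan_pair ℝ _ _))
  have h1 : ‖p - A 1‖ ≤ ‖A j - A 1‖ :=
    pyth_aux (A j) p (A 1) (horth (A 1) (right_mem_affineSpan_pair ℝ _ _))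
  have hdj0 : ‖A j - A 0‖ ≤ ‖A 1 - A 0‖ := by
    have := hdiam j 0
    rw [dist_eq_norm, dist_eq_norm] at this
    calc ‖A j - A 0‖ ≤ ‖A 0 - A 1‖ := this
      _ = ‖A 1 - A 0‖ := norm_sub_rev _ _
  have hdj1 : ‖A j - A 1‖ ≤ ‖A 1 - A 0‖ := by
    have := hdiam j 1
    rw [dist_eq_norm, dist_eq_norm] at this
    calc ‖A j - A 1‖ ≤ ‖A 0 - A 1‖ := this
      _ = ‖A 1 - A 0‖ := norm_sub_rev _ _
  have habs0 : |t| ≤ 1 := by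
    have := h0.trans hdj0
    rw [hpA0] at this
    nlinarith [abs_nonneg t]
  have habs1 : |t - 1| ≤ 1 := by
    have := h1.trans hdj1
    rw [hpA1] at this
    nlinarith [abs_nonneg (t - 1)]
  have ht0 : 0 ≤ t := by
    rcases abs_le.mp habs1 with ⟨h, _⟩; linarith
  have ht1 : t ≤ 1 := (abs_le.mp habs0).2
  refine ⟨t, ht0, ht1, ?_⟩
  rw [hpt, sub_smul, one_smul, smul_sub]
  abel

/-- Let `A₀,…,A_d` be affinely independent points in `ℝᵈ` ordered so that
`[A₀,A₁]` realizes the diameter and, for `2 ≤ i ≤ d-1`, `A_i` is farthest from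
`aff{A₀,…,A_{i-1}}` among `A_i,…,A_d`. Then for `1 ≤ i ≤ d-1` the orthogonal projection
of every `A_j` onto `aff{A₀,…,A_i}` lies within distance `d_i` of `aff{A₀,…,A_{i-1}}`;
in particular, the orthogonal projection of any `A_j` onto the line `aff{A₀,A₁}`
lies on the segment `[A₀,A₁]`. -/
theorem projections_in_boxes (d : ℕ) (hd : 2 ≤ d)
    (A : Fin (d + 1) → EuclideanSpace ℝ (Fin d))
    (hind : AffineIndependent ℝ A)
    (hdiam : ∀ j k, dist (A j) (A k) ≤ dist (A 0) (A 1))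
    (hmax : ∀ i : Fin (d + 1), 2 ≤ (i : ℕ) → (i : ℕ) ≤ d - 1 →
      ∀ j : Fin (d + 1), (i : ℕ) ≤ (j : ℕ) →
        infDist (A j) (affineSpan ℝ (A '' {k | (k : ℕ) < (i : ℕ)}) :
            Set (EuclideanSpace ℝ (Fin d))) ≤
          infDist (A i) (affineSpan ℝ (A '' {k | (k : ℕ) < (i : ℕ)}) :
            Set (EuclideanSpace ℝ (Fin d)))) :
    (∀ i : ℕ, ∀ _hi1 : 1 ≤ i, ∀ _hi2 : i ≤ d - 1, ∀ j : Fin (d + 1),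
      ∀ p : EuclideanSpace ℝ (Fin d),
        p ∈ affineSpan ℝ (A '' {k | (k : ℕ) ≤ i}) →
        (∀ q ∈ (affineSpan ℝ (A '' {k | (k : ℕ) ≤ i}) :
            Set (EuclideanSpace ℝ (Fin d))), ⟪A j - p, q - p⟫ = 0) →
        infDist p (affineSpan ℝ (A '' {k | (k : ℕ) < i}) :
            Set (EuclideanSpace ℝ (Fin d))) ≤
          infDist (A ⟨i, by omega⟩) (affineSpan ℝ (A '' {k | (k : ℕ) < i}) :
            Set (EuclideanSpace ℝ (Fin d)))) ∧
    (∀ j : Fin (d + 1), ∀ p : EuclideanSpace ℝ (Fin d),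
      p ∈ affineSpan ℝ ({A 0, A 1} : Set (EuclideanSpace ℝ (Fin d))) →
      (∀ q ∈ (affineSpan ℝ ({A 0, A 1} : Set (EuclideanSpace ℝ (Fin d))) :
          Set (EuclideanSpace ℝ (Fin d))), ⟪A j - p, q - p⟫ = 0) →
      p ∈ segment ℝ (A 0) (A 1)) := by
  constructor
  · intro i hi1 hi2 j p hp horth
    -- common facts
    rcases Nat.lt_or_ge i 2 with hi | hi
    · -- i = 1
      have hi1' : i = 1 := by omega
      subst hi1'
      have hv1 : ((1 : Fin (d + 1)) : ℕ) = 1 := fin_val_one_aux d hd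
      have hset : (A '' {k | (k : ℕ) ≤ 1}) = ({A 0, A 1} : Set (EuclideanSpace ℝ (Fin d))) := by
        ext x
        simp only [Set.mem_image, Set.mem_setOf_eq, Set.mem_insert_iff, Set.mem_singleton_iff]
        constructor
        · rintro ⟨k, hk, rfl⟩
          rcases Nat.le_one_iff_eq_zero_or_eq_one.mp hk with h | h
          · left
            have : k = 0 := Fin.ext (by rw [h]; rfl)
            rw [this]
          · right
            have : k = 1 := Fin.ext (by rw [h, hv1])
            rw [this]
        · rintro (rfl | rfl)
          · exact ⟨0, by show ((0 : Fin (d + 1)) : ℕ) ≤ 1; rw [fin_val_zero_aux]; omega, rfl⟩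
          · exact ⟨1, by show ((1 : Fin (d + 1)) : ℕ) ≤ 1; rw [hv1], rfl⟩
      rw [hset] at hp horth
      obtain ⟨t, ht0, ht1, hpt⟩ := key_aux d hd A hind hdiam j p hp horth
      have hset' : (A '' {k | (k : ℕ) < 1}) = ({A 0} : Set (EuclideanSpace ℝ (Fin d))) := by
        ext x
        simp only [Set.mem_image, Set.mem_setOf_eq, Set.mem_singleton_iff]
        constructor
        · rintro ⟨k, hk, rfl⟩
          have : k = 0 := Fin.ext (by rw [fin_val_zero_aux]; omega)
          rw [this]
        · rintro rfl
          exact ⟨0, by show ((0 : Fin (d + 1)) : ℕ) < 1; rw [fin_val_zero_aux]; omega, rfl⟩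
      rw [hset', AffineSubspace.coe_affineSpan_singleton]
      have hA1 : (⟨1, by omega⟩ : Fin (d + 1)) = 1 := Fin.ext (by rw [hv1])
      rw [hA1]
      rw [infDist_singleton, infDist_singleton, dist_eq_norm, dist_eq_norm]
      have hp0 : p - A 0 = t • (A 1 - A 0) := by
        rw [hpt, sub_smul, one_smul, smul_sub]; abel
      rw [hp0, norm_smul, Real.norm_eq_abs, abs_of_nonneg ht0]
      calc t * ‖A 1 - A 0‖ ≤ 1 * ‖A 1 - A 0‖ := by
            apply mul_le_mul_of_nonneg_right ht1 (norm_nonneg _)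
        _ = ‖A 1 - A 0‖ := one_mul _
    · -- i ≥ 2 : use hmax
      set S : Set (EuclideanSpace ℝ (Fin d)) :=
        (affineSpan ℝ (A '' {k | (k : ℕ) < i}) : Set (EuclideanSpace ℝ (Fin d))) with hS
      have hid : i < d + 1 := by omega
      have hSsub : S ⊆ (affineSpan ℝ (A '' {k | (k : ℕ) ≤ i}) :
          Set (EuclideanSpace ℝ (Fin d))) := by
        apply affineSpan_mono
        apply Set.image_mono
        intro k hk
        simp only [Set.mem_setOf_eq] at hk ⊢
        omega
      have hSne : S.Nonempty := by
        refine ⟨A 0, subset_affineSpan _ _ ⟨0, ?_, rfl⟩⟩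
        show ((0 : Fin (d + 1)) : ℕ) < i
        simpa using by omega
      -- step 1 : infDist p S ≤ infDist (A j) S
      have step1 : infDist p S ≤ infDist (A j) S := by
        refine le_of_forall_pos_le_add fun ε hε => ?_
        obtain ⟨q, hq, hqd⟩ := (infDist_lt_iff hSne).mp
          (lt_add_of_pos_right (infDist (A j) S) hε)
        calc infDist p S ≤ dist p q := infDist_le_dist_of_mem hq
          _ ≤ dist (A j) q := by
              rw [dist_eq_norm, dist_eq_norm]
              exact pyth_aux (A j) p q (horth q (hSsub hq))
          _ ≤ infDist (A j) S + ε := le_of_lt hqd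
      -- step 2 : infDist (A j) S ≤ infDist (A i) S
      have step2 : infDist (A j) S ≤ infDist (A ⟨i, hid⟩) S := by
        rcases Nat.lt_or_ge (j : ℕ) i with hj | hj
        · have : A j ∈ S := subset_affineSpan _ _ ⟨j, hj, rfl⟩
          have h0 : infDist (A j) S = 0 := infDist_zero_of_mem this
          rw [h0]
          exact infDist_nonneg
        · have := hmax ⟨i, hid⟩ (by simpa using hi) (by simpa using hi2) j (by simpa using hj)
          simpa using this
      calc infDist p S ≤ infDist (A j) S := step1
        _ ≤ infDist (A ⟨i, hid⟩) S := step2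
        _ = infDist (A ⟨i, by omega⟩) S := rfl
  · intro j p hp horth
    obtain ⟨t, ht0, ht1, hpt⟩ := key_aux d hd A hind hdiam j p hp horth
    exact ⟨1 - t, t, by linarith, ht0, by ring, hpt.symm⟩
end
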